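/- Let D_1, M_1, D̂ be as follows: D_0 symmetric positive definite of size (p-1), M_1 symmetric positive definite of size p, D_1 the p×p matrix with D_0 as lower-right block and zeros elsewhere, and D̂ = D_1 ⊗ M_1 + M_1 ⊗ D_1. Then D̂ is symmetric positive semidefinite with kernel of dimension exactly 1. -/

import Mathlib

/-!
Write a vector as `vec X` for a square matrix `X`, so that `D̂ (vec X) = vec (M₁ X D₁ᵀ + D₁ X M₁ᵀ)`.
Both Kronecker summands are positive semidefinite, so `D̂ (vec X) = 0` forces each summand to
annihilate `vec X`; as `M₁` is invertible this means `D₁ Xᵀ = 0` and `D₁ X = 0`. Since `D₁` is `D₀`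
bordered by zeros and `D₀` is invertible, this says exactly that every entry of `X` off the
`(0, 0)` position vanishes, so the kernel is the line through `vec E₀₀`.
-/

open Matrix Kronecker

namespace Matrix

open scoped ComplexOrder in
theorem PosSemidef.add_mulVec_eq_zero_iff {𝕜 n : Type*} [RCLike 𝕜] [Fintype n]
    {A B : Matrix n n 𝕜} (hA : A.PosSemidef) (hB : B.PosSemidef) (x : n → 𝕜) :
    (A + B) *ᵥ x = 0 ↔ A *ᵥ x = 0 ∧ B *ᵥ x = 0 := by
  refine ⟨fun h => ?_, fun ⟨hAx, hBx⟩ => by rw [add_mulVec, hAx, hBx, add_zero]⟩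
  have hsum : star x ⬝ᵥ A *ᵥ x + star x ⬝ᵥ B *ᵥ x = 0 := by
    rw [← dotProduct_add, ← add_mulVec, h, dotProduct_zero]
  rw [add_eq_zero_iff_of_nonneg (hA.dotProduct_mulVec_nonneg x)
    (hB.dotProduct_mulVec_nonneg x)] at hsum
  exact ⟨(hA.dotProduct_mulVec_zero_iff x).mp hsum.1, (hB.dotProduct_mulVec_zero_iff x).mp hsum.2⟩

theorem mul_eq_zero_iff_forall_mulVec_col {α l m n : Type*} [NonUnitalNonAssocSemiring α]
    [Fintype m] (A : Matrix l m α) (X : Matrix m n α) :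
    A * X = 0 ↔ ∀ j, A *ᵥ (fun i => X i j) = 0 := by
  simp only [← Matrix.ext_iff, funext_iff, zero_apply, Pi.zero_apply]
  exact forall_comm

section ZeroBorder

variable {α : Type*} {n : ℕ}

def zeroBorder [Zero α] (D : Matrix (Fin n) (Fin n) α) : Matrix (Fin (n + 1)) (Fin (n + 1)) α :=
  of fun i j => if hi : i = 0 then 0 else if hj : j = 0 then 0 else D (i.pred hi) (j.pred hj)

section Zero

variable [Zero α] (D : Matrix (Fin n) (Fin n) α)

@[simp]
theorem zeroBorder_zero_left (j : Fin (n + 1)) : zeroBorder D 0 j = 0 := rfl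

@[simp]
theorem zeroBorder_zero_right (i : Fin (n + 1)) : zeroBorder D i 0 = 0 := by
  simp [zeroBorder]

@[simp]
theorem zeroBorder_succ_succ (i j : Fin n) : zeroBorder D i.succ j.succ = D i j := by
  simp [zeroBorder]

end Zero

theorem zeroBorder_mulVec [NonUnitalNonAssocSemiring α] (D : Matrix (Fin n) (Fin n) α)
    (v : Fin (n + 1) → α) : zeroBorder D *ᵥ v = Fin.cons 0 (D *ᵥ Fin.tail v) := by
  ext i
  cases i using Fin.cases <;> simp [mulVec, dotProduct, Fin.sum_univ_succ, Fin.tail]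

theorem conjTranspose_zeroBorder [AddMonoid α] [StarAddMonoid α] (D : Matrix (Fin n) (Fin n) α) :
    (zeroBorder D)ᴴ = zeroBorder Dᴴ := by
  ext i j
  cases i using Fin.cases <;> cases j using Fin.cases <;> simp

theorem star_dotProduct_zeroBorder_mulVec [NonUnitalNonAssocSemiring α] [StarRing α]
    (D : Matrix (Fin n) (Fin n) α) (v : Fin (n + 1) → α) :
    star v ⬝ᵥ zeroBorder D *ᵥ v = star (Fin.tail v) ⬝ᵥ D *ᵥ Fin.tail v := by
  simp [zeroBorder_mulVec, dotProduct, Fin.sum_univ_succ, Fin.tail]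

theorem PosSemidef.zeroBorder [Ring α] [PartialOrder α] [StarRing α]
    {D : Matrix (Fin n) (Fin n) α} (hD : D.PosSemidef) : (zeroBorder D).PosSemidef :=
  .of_dotProduct_mulVec_nonneg (by rw [IsHermitian, conjTranspose_zeroBorder, hD.isHermitian.eq])
    fun v => by rw [star_dotProduct_zeroBorder_mulVec]; exact hD.dotProduct_mulVec_nonneg _

theorem zeroBorder_mulVec_eq_zero_iff [Field α] {D : Matrix (Fin n) (Fin n) α} (hD : IsUnit D)
    (v : Fin (n + 1) → α) : zeroBorder D *ᵥ v = 0 ↔ Fin.tail v = 0 := by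
  rw [zeroBorder_mulVec, ← vecCons, cons_eq_zero_iff,
    (mulVec_injective_iff_isUnit.mpr hD).eq_iff' (mulVec_zero _)]
  simp

theorem zeroBorder_mul_eq_zero_iff [Field α] {m : Type*} {D : Matrix (Fin n) (Fin n) α}
    (hD : IsUnit D) (X : Matrix (Fin (n + 1)) m α) :
    zeroBorder D * X = 0 ↔ ∀ (i : Fin n) j, X i.succ j = 0 := by
  simp only [mul_eq_zero_iff_forall_mulVec_col, zeroBorder_mulVec_eq_zero_iff hD, funext_iff,
    Fin.tail, Pi.zero_apply]
  exact forall_comm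

end ZeroBorder

theorem exists_single_zero_zero_eq_iff {α : Type*} [Zero α] {m n : ℕ}
    (X : Matrix (Fin (m + 1)) (Fin (n + 1)) α) :
    (∃ a, single 0 0 a = X) ↔
      (∀ (i : Fin m) j, X i.succ j = 0) ∧ ∀ i (j : Fin n), X i j.succ = 0 := by
  constructor
  · rintro ⟨a, rfl⟩
    constructor <;> intro i j <;> simp [(Fin.succ_ne_zero _).symm]
  · rintro ⟨hrow, hcol⟩
    refine ⟨X 0 0, ?_⟩
    ext i j
    cases i using Fin.cases <;> cases j using Fin.cases <;>
      simp [(Fin.succ_ne_zero _).symm, hrow, hcol]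

end Matrix

theorem stmt_9 (n : ℕ)
    (D0 : Matrix (Fin n) (Fin n) ℝ) (hD0 : D0.PosDef)
    (M1 : Matrix (Fin (n + 1)) (Fin (n + 1)) ℝ) (hM1 : M1.PosDef)
    (D1 : Matrix (Fin (n + 1)) (Fin (n + 1)) ℝ)
    (hD1 : D1 = Matrix.of fun i j : Fin (n + 1) =>
      if hi : i = 0 then 0 else if hj : j = 0 then 0 else D0 (i.pred hi) (j.pred hj))
    (Dhat : Matrix (Fin (n + 1) × Fin (n + 1)) (Fin (n + 1) × Fin (n + 1)) ℝ)
    (hDhat : Dhat = D1 ⊗ₖ M1 + M1 ⊗ₖ D1) :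
    Dhat.PosSemidef ∧
      Module.finrank ℝ (LinearMap.ker (Matrix.toLin' Dhat)) = 1 := by
  obtain rfl : D1 = zeroBorder D0 := hD1
  have hD1psd : (zeroBorder D0).PosSemidef := hD0.posSemidef.zeroBorder
  have hK₁ := hD1psd.kronecker hM1.posSemidef
  have hK₂ := hM1.posSemidef.kronecker hD1psd
  subst hDhat
  refine ⟨hK₁.add hK₂, ?_⟩
  suffices LinearMap.ker (toLin' (zeroBorder D0 ⊗ₖ M1 + M1 ⊗ₖ zeroBorder D0)) =
      ℝ ∙ vec (single 0 0 1) by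
    rw [this, finrank_span_singleton]
    simp
  ext x
  obtain ⟨X, rfl⟩ := vec_bijective.surjective x
  rw [LinearMap.mem_ker, toLin'_apply, hK₁.add_mulVec_eq_zero_iff hK₂, kronecker_mulVec_vec,
    kronecker_mulVec_vec, vec_eq_zero_iff, vec_eq_zero_iff, mul_assoc,
    hM1.isUnit.mul_right_eq_zero, hM1.transpose.isUnit.mul_left_eq_zero, ← transpose_eq_zero,
    transpose_mul, transpose_transpose, zeroBorder_mul_eq_zero_iff hD0.isUnit,
    zeroBorder_mul_eq_zero_iff hD0.isUnit, Submodule.mem_span_singleton]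
  simp only [← vec_smul, vec_inj, smul_single, smul_eq_mul, mul_one,
    exists_single_zero_zero_eq_iff, transpose_apply]
  exact and_comm.trans (and_congr_right' forall_comm)
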